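/- arXiv:2604.06378 — 6 statements merged into one kernel-verified Lean document; each statement's English description precedes it below -/
import Mathlib

section
/- For each group g ∈ {X, Y}, let f₁^g, f₀^g be full-support probability densities on ℝ satisfying strict MLRP, and let H^g be a full-support cost CDF. Then there exist measurable classifiers δ^X, δ^Y : ℝ → [0,1] and stakes r^X, r^Y ∈ ℝ such that: (i) TPR(δ^X) = TPR(δ^Y) =: 𝒯 and FPR(δ^X) = FPR(δ^Y) =: ℱ, where group g's error rates are computed against f₁^g, f₀^g (error-rate balance), with 0 < ℱ < 𝒯 (informativeness); (ii) the equilibrium prevalences π^g = H^g(r^g·(𝒯 − ℱ)) satisfy π^X = π^Y, so that the positive predictive values π^g·𝒯/(π^g·𝒯 + (1−π^g)·ℱ) coincide across groups (predictive parity); and (iii) π^g ≥ H^g(0) for both groups (aligned incentives). -/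
/-!
By strict MLRP the densities `f₁`, `f₀` differ on a set of positive measure, so the
likelihood-ratio test `1{f₀ < f₁}` has TPR > FPR. Mixing it with the constant classifiers
moves its rates affinely, so each group can attain the common rates `(1/2 + ε, 1/2)` for every
small `ε > 0`. By the intermediate value theorem, stakes can then bring both equilibrium
prevalences to `max (H^X 0) (H^Y 0)`.
-/

open MeasureTheory

def IsFullSupportDensity (f : ℝ → ℝ) : Prop :=
  Measurable f ∧ (∀ s, 0 < f s) ∧ (∫ s, f s) = 1

def StrictMLRP (f₁ f₀ : ℝ → ℝ) : Prop :=
  ∀ s t : ℝ, s < t → f₁ s * f₀ t < f₁ t * f₀ s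

/-- `δ s` is the probability that signal `s` is classified as compliant. -/
def IsClassifier (δ : ℝ → ℝ) : Prop :=
  Measurable δ ∧ ∀ s, δ s ∈ Set.Icc (0 : ℝ) 1

noncomputable def TPR (δ f₁ : ℝ → ℝ) : ℝ := ∫ s, δ s * f₁ s

noncomputable def FPR (δ f₀ : ℝ → ℝ) : ℝ := ∫ s, δ s * f₀ s

def IsFullSupportCDF (H : ℝ → ℝ) : Prop :=
  Monotone H ∧ Continuous H ∧ (∀ c, 0 < H c ∧ H c < 1) ∧
    Filter.Tendsto H Filter.atBot (nhds 0) ∧ Filter.Tendsto H Filter.atTop (nhds 1)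

noncomputable def PPV (π 𝒯 ℱ : ℝ) : ℝ := π * 𝒯 / (π * 𝒯 + (1 - π) * ℱ)

open Filter Topology

theorem IsFullSupportDensity.integrable {f : ℝ → ℝ} (hf : IsFullSupportDensity f) :
    Integrable f := by
  by_contra h
  simpa [integral_undef h] using hf.2.2

theorem StrictMLRP.not_ae_eq {f₁ f₀ : ℝ → ℝ} (hm : StrictMLRP f₁ f₀) {μ : Measure ℝ}
    [NeZero μ] [NullSingletonClass μ] : ¬ f₁ =ᵐ[μ] f₀ := by
  intro h
  obtain ⟨s, hs⟩ := h.exists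
  obtain ⟨t, ht, hts⟩ := (h.and (Measure.ae_ne μ s)).exists
  rcases hts.lt_or_gt with hlt | hlt
  · have := hm t s hlt
    rw [hs, ht, mul_comm] at this
    exact this.false
  · have := hm s t hlt
    rw [hs, ht, mul_comm] at this
    exact this.false

theorem integral_max_sub_zero_pos {α : Type*} [MeasurableSpace α] {μ : Measure α}
    {f g : α → ℝ} (hf : Integrable f μ) (hg : Integrable g μ)
    (hfg : ∫ x, f x ∂μ = ∫ x, g x ∂μ) (hne : ¬ f =ᵐ[μ] g) :
    0 < ∫ x, max (f x - g x) 0 ∂μ := by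
  have hnonneg : 0 ≤ fun x => max (f x - g x) 0 := fun x => le_max_right _ _
  refine (integral_nonneg hnonneg).lt_of_ne fun h => hne ?_
  have hzero := (integral_eq_zero_iff_of_nonneg hnonneg ((hf.sub hg).pos_part)).1 h.symm
  have hle : f ≤ᵐ[μ] g := by
    filter_upwards [hzero] with x hx
    simpa using hx
  exact (integral_eq_iff_of_ae_le hf hg hle).1 hfg

namespace IsClassifier

variable {δ : ℝ → ℝ}

theorem integrable_mul (hδ : IsClassifier δ) {f : ℝ → ℝ} (hf : Integrable f) :
    Integrable fun s => δ s * f s :=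
  hf.bdd_mul (c := 1) hδ.1.aestronglyMeasurable <| ae_of_all _ fun s => by
    rw [Real.norm_eq_abs, abs_le]
    exact ⟨by linarith [(hδ.2 s).1], (hδ.2 s).2⟩

theorem affine (hδ : IsClassifier δ) {a b : ℝ} (ha : 0 ≤ a) (hb : 0 ≤ b) (hab : a + b ≤ 1) :
    IsClassifier fun s => a * δ s + b := by
  refine ⟨(hδ.1.const_mul a).add_const b, fun s => ⟨?_, ?_⟩⟩
  · nlinarith [(hδ.2 s).1]
  · nlinarith [(hδ.2 s).2]

theorem integral_affine_mul (hδ : IsClassifier δ) {f : ℝ → ℝ} (hf : IsFullSupportDensity f)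
    (a b : ℝ) : ∫ s, (a * δ s + b) * f s = a * (∫ s, δ s * f s) + b := by
  have hsplit : (fun s => (a * δ s + b) * f s) = fun s => a * (δ s * f s) + b * f s := by
    funext s; ring
  rw [hsplit, integral_add ((hδ.integrable_mul hf.integrable).const_mul a)
    (hf.integrable.const_mul b), integral_const_mul, integral_const_mul, hf.2.2, mul_one]

theorem integral_mul_mem_Icc (hδ : IsClassifier δ) {f : ℝ → ℝ} (hf : IsFullSupportDensity f) :
    ∫ s, δ s * f s ∈ Set.Icc (0 : ℝ) 1 := by
  refine ⟨integral_nonneg fun s => mul_nonneg (hδ.2 s).1 (hf.2.1 s).le, ?_⟩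
  calc ∫ s, δ s * f s ≤ ∫ s, f s :=
        integral_mono (hδ.integrable_mul hf.integrable) hf.integrable fun s =>
          mul_le_of_le_one_left (hf.2.1 s).le (hδ.2 s).2
    _ = 1 := hf.2.2

end IsClassifier

noncomputable def likelihoodClassifier (f₁ f₀ : ℝ → ℝ) : ℝ → ℝ := {s | f₀ s < f₁ s}.indicator 1

theorem isClassifier_likelihoodClassifier {f₁ f₀ : ℝ → ℝ} (h₁ : Measurable f₁)
    (h₀ : Measurable f₀) : IsClassifier (likelihoodClassifier f₁ f₀) :=
  ⟨measurable_const.indicator (measurableSet_lt h₀ h₁), fun s => by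
    by_cases hs : f₀ s < f₁ s <;> simp [likelihoodClassifier, hs]⟩

theorem FPR_lt_TPR_likelihoodClassifier {f₁ f₀ : ℝ → ℝ} (h₁ : IsFullSupportDensity f₁)
    (h₀ : IsFullSupportDensity f₀) (hm : StrictMLRP f₁ f₀) :
    FPR (likelihoodClassifier f₁ f₀) f₀ < TPR (likelihoodClassifier f₁ f₀) f₁ := by
  have hχ := isClassifier_likelihoodClassifier h₁.1 h₀.1
  have hgap : TPR (likelihoodClassifier f₁ f₀) f₁ - FPR (likelihoodClassifier f₁ f₀) f₀ =
      ∫ s, max (f₁ s - f₀ s) 0 := by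
    rw [TPR, FPR, ← integral_sub (hχ.integrable_mul h₁.integrable)
      (hχ.integrable_mul h₀.integrable)]
    congr 1 with s
    by_cases hs : f₀ s < f₁ s
    · simp [likelihoodClassifier, hs, hs.le]
    · simp [likelihoodClassifier, hs, not_lt.1 hs]
  have hpos := integral_max_sub_zero_pos h₁.integrable h₀.integrable (h₁.2.2.trans h₀.2.2.symm)
    hm.not_ae_eq
  linarith

theorem eventually_exists_classifier_rates {f₁ f₀ : ℝ → ℝ} (h₁ : IsFullSupportDensity f₁)
    (h₀ : IsFullSupportDensity f₀) (hm : StrictMLRP f₁ f₀) :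
    ∀ᶠ ε in 𝓝[>] 0, ∃ δ, IsClassifier δ ∧ TPR δ f₁ = 1 / 2 + ε ∧ FPR δ f₀ = 1 / 2 := by
  set χ := likelihoodClassifier f₁ f₀
  have hχ : IsClassifier χ := isClassifier_likelihoodClassifier h₁.1 h₀.1
  have hgap : 0 < TPR χ f₁ - FPR χ f₀ := sub_pos.2 (FPR_lt_TPR_likelihoodClassifier h₁ h₀ hm)
  obtain ⟨hF0, hF1⟩ : FPR χ f₀ ∈ Set.Icc 0 1 := hχ.integral_mul_mem_Icc h₀
  filter_upwards [Ioc_mem_nhdsGT (half_pos hgap)] with ε ⟨hε0, hε⟩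
  -- mix `χ` with the constant classifiers `1` and `0`, shrinking its gap to `ε` around `1 / 2`
  set a := ε / (TPR χ f₁ - FPR χ f₀)
  have hgap_a : a * (TPR χ f₁ - FPR χ f₀) = ε := div_mul_cancel₀ ε hgap.ne'
  have ha0 : 0 ≤ a := div_nonneg hε0.le hgap.le
  have ha1 : a ≤ 1 / 2 := by rw [div_le_iff₀ hgap]; linarith
  have haF : a * FPR χ f₀ ≤ 1 / 2 := by nlinarith
  refine ⟨fun s => a * χ s + (1 / 2 - a * FPR χ f₀), hχ.affine ha0 (by linarith) (by nlinarith),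
    ?_, ?_⟩
  · rw [TPR, hχ.integral_affine_mul h₁, ← TPR]
    linarith
  · rw [FPR, hχ.integral_affine_mul h₀, ← FPR]
    ring

theorem IsFullSupportCDF.exists_mul_eq {H : ℝ → ℝ} (hH : IsFullSupportCDF H) {ε : ℝ}
    (hε : ε ≠ 0) {π : ℝ} (hπ : π ∈ Set.Ico (H 0) 1) : ∃ r, H (r * ε) = π := by
  obtain ⟨c, -, hc⟩ := isPreconnected_univ.intermediate_value_Ico (Set.mem_univ 0)
    (le_principal_iff.2 univ_mem) hH.2.1.continuousOn hH.2.2.2.2 hπ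
  exact ⟨c / ε, by rwa [div_mul_cancel₀ c hε]⟩

/-- **Theorem 1.** For any two groups there exist an informative classification rule
(pair of group-specific classifiers with common error rates `0 < ℱ < 𝒯`) and stakes
satisfying aligned incentives such that error-rate balance and predictive parity are
jointly satisfied in equilibrium. -/
theorem fairness_possibility
    (f₁X f₀X f₁Y f₀Y : ℝ → ℝ) (HX HY : ℝ → ℝ)
    (h₁X : IsFullSupportDensity f₁X) (h₀X : IsFullSupportDensity f₀X)
    (h₁Y : IsFullSupportDensity f₁Y) (h₀Y : IsFullSupportDensity f₀Y)
    (hmX : StrictMLRP f₁X f₀X) (hmY : StrictMLRP f₁Y f₀Y)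
    (hHX : IsFullSupportCDF HX) (hHY : IsFullSupportCDF HY) :
    ∃ (δX δY : ℝ → ℝ) (rX rY 𝒯 ℱ : ℝ),
      IsClassifier δX ∧ IsClassifier δY ∧
      -- error-rate balance with common rates 𝒯 and ℱ
      TPR δX f₁X = 𝒯 ∧ TPR δY f₁Y = 𝒯 ∧
      FPR δX f₀X = ℱ ∧ FPR δY f₀Y = ℱ ∧
      -- informativeness
      0 < ℱ ∧ ℱ < 𝒯 ∧
      -- equal equilibrium prevalence, hence predictive parity
      HX (rX * (𝒯 - ℱ)) = HY (rY * (𝒯 - ℱ)) ∧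
      PPV (HX (rX * (𝒯 - ℱ))) 𝒯 ℱ = PPV (HY (rY * (𝒯 - ℱ))) 𝒯 ℱ ∧
      -- aligned incentives
      HX (rX * (𝒯 - ℱ)) ≥ HX 0 ∧ HY (rY * (𝒯 - ℱ)) ≥ HY 0 := by
  obtain ⟨ε, ⟨δX, hδX, hTX, hFX⟩, ⟨δY, hδY, hTY, hFY⟩, hε⟩ :=
    ((eventually_exists_classifier_rates h₁X h₀X hmX).and
      ((eventually_exists_classifier_rates h₁Y h₀Y hmY).and eventually_mem_nhdsWithin)).exists
  set π := max (HX 0) (HY 0)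
  have hπ : π < 1 := max_lt (hHX.2.2.1 0).2 (hHY.2.2.1 0).2
  obtain ⟨rX, hrX⟩ := hHX.exists_mul_eq hε.ne' ⟨le_max_left _ _, hπ⟩
  obtain ⟨rY, hrY⟩ := hHY.exists_mul_eq hε.ne' ⟨le_max_right _ _, hπ⟩
  refine ⟨δX, δY, rX, rY, 1 / 2 + ε, 1 / 2, hδX, hδY, hTX, hTY, hFX, hFY, one_half_pos,
    by linarith [hε.out], ?_⟩
  rw [add_sub_cancel_left, hrX, hrY]
  exact ⟨rfl, rfl, le_max_left _ _, le_max_right _ _⟩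
end

section
/- Let H^X, H^Y : ℝ → ℝ satisfy H^Y(c) < H^X(c) for all c ∈ ℝ (group Y's compliance-cost distribution strictly first-order stochastically dominates group X's), and let 𝒯 > ℱ be common error rates shared by the two groups. Then for every common stake r ∈ ℝ (equal stakes), the induced equilibrium prevalences differ: H^X(r·(𝒯 − ℱ)) ≠ H^Y(r·(𝒯 − ℱ)). Consequently, if moreover 𝒯 > ℱ > 0, the groups' positive predictive values π^g·𝒯/(π^g·𝒯 + (1−π^g)·ℱ) differ, so predictive parity fails under equal stakes. -/
lemma PPV_inj {a b 𝒯 ℱ : ℝ} (ha : a ∈ Set.Icc (0:ℝ) 1) (hb : b ∈ Set.Icc (0:ℝ) 1)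
    (hTF : 𝒯 > ℱ) (hF : ℱ > 0) (h : PPV a 𝒯 ℱ = PPV b 𝒯 ℱ) : a = b := by
  obtain ⟨ha0, ha1⟩ := ha
  obtain ⟨hb0, hb1⟩ := hb
  have hda : a * 𝒯 + (1 - a) * ℱ > 0 := by nlinarith
  have hdb : b * 𝒯 + (1 - b) * ℱ > 0 := by nlinarith
  unfold PPV at h
  rw [div_eq_div_iff (ne_of_gt hda) (ne_of_gt hdb)] at h
  nlinarith [h, mul_pos (hF.trans hTF) hF, mul_pos (mul_pos (hF.trans hTF) hF) (sub_pos.mpr hTF)]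

/-- If group `Y`'s cost CDF strictly first-order stochastically dominates group `X`'s
(`HY c < HX c` for all `c`), then under any common stake `r` the equilibrium prevalences
`HX (r·(𝒯−ℱ))` and `HY (r·(𝒯−ℱ))` differ; consequently, when moreover `𝒯 > ℱ > 0`, the
positive predictive values differ, so predictive parity fails under equal stakes. -/
theorem no_parity_under_dominance_and_equal_stakes
    (HX HY : ℝ → ℝ)
    (hX01 : ∀ c, HX c ∈ Set.Icc (0 : ℝ) 1) (hY01 : ∀ c, HY c ∈ Set.Icc (0 : ℝ) 1)
    (hdom : ∀ c, HY c < HX c) (𝒯 ℱ : ℝ) (hTF : 𝒯 > ℱ) :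
    (∀ r : ℝ, HX (r * (𝒯 - ℱ)) ≠ HY (r * (𝒯 - ℱ))) ∧
    (ℱ > 0 → ∀ r : ℝ,
      PPV (HX (r * (𝒯 - ℱ))) 𝒯 ℱ ≠ PPV (HY (r * (𝒯 - ℱ))) 𝒯 ℱ) := by
  refine ⟨fun r => (hdom _).ne', fun hF r h => ?_⟩
  exact (hdom _).ne' (PPV_inj (hX01 _) (hY01 _) hTF hF h)
end

section
/- Let H^X, H^Y : ℝ → ℝ be monotone nondecreasing with H^Y(c) < H^X(c) for all c ∈ ℝ, and let E > 0. If stakes r^X, r^Y ∈ ℝ equalize prevalence, i.e. H^X(r^X·E) = H^Y(r^Y·E), then r^Y > r^X: attaining predictive parity requires strictly higher stakes for the dominated (disadvantaged) group. -/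
/-- If group `Y`'s cost CDF strictly first-order stochastically dominates group `X`'s
(`HY c < HX c` for all `c`), with `E = 𝒯 − ℱ > 0`, then any stakes equalizing the
equilibrium prevalences (hence attaining predictive parity) must satisfy `rY > rX`:
the disadvantaged group must face strictly higher stakes. -/
theorem dominance_requires_higher_stakes
    (HX HY : ℝ → ℝ) (hX : Monotone HX) (hY : Monotone HY)
    (hdom : ∀ c, HY c < HX c) (E : ℝ) (hE : 0 < E)
    (rX rY : ℝ) (heq : HX (rX * E) = HY (rY * E)) :
    rY > rX := by
  by_contra h
  push_neg at h
  have : HY (rY * E) ≤ HY (rX * E) :=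
    hY (mul_le_mul_of_nonneg_right h hE.le)
  exact absurd (heq ▸ this) (not_le.mpr (hdom _))
end

section
/- Let f₁, f₀ be full-support probability densities on ℝ satisfying strict MLRP. Then their CDFs satisfy strict first-order stochastic dominance pointwise: F₀(s) > F₁(s) for every s ∈ ℝ. -/
open MeasureTheory

/-- The CDF associated with the density `f`. -/
noncomputable def cdfOf (f : ℝ → ℝ) (s : ℝ) : ℝ := ∫ t in Set.Iic s, f t

lemma aux_setIntegral_lt {S : Set ℝ} (hS : MeasurableSet S) (hμ : 0 < volume S)
    {f g : ℝ → ℝ} (hf : IntegrableOn f S) (hg : IntegrableOn g S)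
    (h : ∀ x ∈ S, f x < g x) : (∫ x in S, f x) < ∫ x in S, g x := by
  have hsub : IntegrableOn (fun x => g x - f x) S := hg.sub hf
  have hpos : (0:ℝ) < ∫ x in S, (g x - f x) := by
    rw [setIntegral_pos_iff_support_of_nonneg_ae]
    · refine lt_of_lt_of_le hμ (measure_mono ?_)
      intro x hx
      exact ⟨ne_of_gt (sub_pos.mpr (h x hx)), hx⟩
    · filter_upwards [ae_restrict_mem hS] with x hx
      exact le_of_lt (sub_pos.mpr (h x hx))
    · exact hsub
  have := integral_sub hg hf
  linarith [this ▸ hpos]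

/-- Strict MLRP between full-support densities implies strict pointwise first-order
stochastic dominance of the corresponding CDFs: `F₀ s > F₁ s` for every `s`. -/
theorem mlrp_implies_strict_fosd
    (f₁ f₀ : ℝ → ℝ) (h₁ : IsFullSupportDensity f₁) (h₀ : IsFullSupportDensity f₀)
    (hm : StrictMLRP f₁ f₀) :
    ∀ s : ℝ, cdfOf f₀ s > cdfOf f₁ s := by
  obtain ⟨hm₁, hp₁, hi₁⟩ := h₁
  obtain ⟨hm₀, hp₀, hi₀⟩ := h₀
  have hint₁ : Integrable f₁ := by
    by_contra h; rw [integral_undef h] at hi₁; norm_num at hi₁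
  have hint₀ : Integrable f₀ := by
    by_contra h; rw [integral_undef h] at hi₀; norm_num at hi₀
  intro s
  set r : ℝ := f₁ s / f₀ s with hr
  have hfs : 0 < f₀ s := hp₀ s
  rcases le_or_gt r 1 with hr1 | hr1
  · -- use the head: on Iio s, f₁ t < r * f₀ t
    have hlt : ∀ t ∈ Set.Iio s, f₁ t < r * f₀ t := by
      intro t ht
      have := hm t s ht
      rw [hr, div_mul_eq_mul_div, lt_div_iff₀ hfs]
      linarith [this]
    have h1 : (∫ t in Set.Iio s, f₁ t) < ∫ t in Set.Iio s, r * f₀ t := by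
      refine aux_setIntegral_lt measurableSet_Iio ?_ (hint₁.integrableOn) ((hint₀.integrableOn).const_mul r) hlt
      simp [Real.volume_Iio]
    have h2 : (∫ t in Set.Iio s, r * f₀ t) ≤ ∫ t in Set.Iio s, f₀ t := by
      rw [integral_const_mul]
      have hnn : (0:ℝ) ≤ ∫ t in Set.Iio s, f₀ t :=
        setIntegral_nonneg measurableSet_Iio fun t _ => (hp₀ t).le
      nlinarith
    have hIicIio₁ : (∫ t in Set.Iic s, f₁ t) = ∫ t in Set.Iio s, f₁ t := by
      rw [← Set.Iio_union_Icc_eq_Iic (le_refl s),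
        setIntegral_union (by simp [Set.disjoint_left]; exact fun a ha => ne_of_lt ha) measurableSet_Icc
          hint₁.integrableOn hint₁.integrableOn]
      simp
    have hIicIio₀ : (∫ t in Set.Iic s, f₀ t) = ∫ t in Set.Iio s, f₀ t := by
      rw [← Set.Iio_union_Icc_eq_Iic (le_refl s),
        setIntegral_union (by simp [Set.disjoint_left]; exact fun a ha => ne_of_lt ha) measurableSet_Icc
          hint₀.integrableOn hint₀.integrableOn]
      simp
    unfold cdfOf
    rw [hIicIio₁, hIicIio₀]
    linarith
  · -- use the tail: on Ioi s, f₀ t < f₁ t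
    have hlt : ∀ t ∈ Set.Ioi s, f₀ t < f₁ t := by
      intro t ht
      have h := hm s t ht
      have hft : 0 < f₀ t := hp₀ t
      have hrt : r * f₀ t < f₁ t := by
        rw [hr, div_mul_eq_mul_div, div_lt_iff₀ hfs]
        linarith [h]
      nlinarith
    have h1 : (∫ t in Set.Ioi s, f₀ t) < ∫ t in Set.Ioi s, f₁ t := by
      refine aux_setIntegral_lt measurableSet_Ioi ?_ hint₀.integrableOn hint₁.integrableOn hlt
      simp [Real.volume_Ioi]
    have e₁ := intervalIntegral.integral_Iic_add_Ioi (b := s) hint₁.integrableOn hint₁.integrableOn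
    have e₀ := intervalIntegral.integral_Iic_add_Ioi (b := s) hint₀.integrableOn hint₀.integrableOn
    rw [hi₁] at e₁; rw [hi₀] at e₀
    unfold cdfOf
    linarith
end

section
/- For each group g ∈ {X, Y}, let f₁^g, f₀^g be full-support probability densities on ℝ satisfying strict MLRP. Then there exist real numbers 𝒯, ℱ with 0 < ℱ < 𝒯 < 1 and measurable classifiers δ^X, δ^Y : ℝ → [0,1] such that ∫_ℝ δ^g(s)·f₁^g(s) ds = 𝒯 and ∫_ℝ δ^g(s)·f₀^g(s) ds = ℱ for both groups g: error-rate balance together with informativeness can always be attained via group-specific randomized post-processing of the signals. -/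
open MeasureTheory

lemma dens_integrable {f : ℝ → ℝ} (h : IsFullSupportDensity f) : Integrable f := by
  by_contra hc
  have := h.2.2
  rw [integral_undef hc] at this
  norm_num at this

lemma classifier_mul_integrable {δ f : ℝ → ℝ} (hδ : IsClassifier δ)
    (hf : IsFullSupportDensity f) : Integrable (fun s => δ s * f s) := by
  refine (dens_integrable hf).mono' ((hδ.1.mul hf.1).aestronglyMeasurable) ?_
  filter_upwards with s
  have h0 := (hδ.2 s).1
  have h1 := (hδ.2 s).2
  have hfp := (hf.2.1 s).le
  rw [Real.norm_eq_abs, abs_of_nonneg (mul_nonneg h0 hfp)]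
  nlinarith

lemma base_classifier (f₁ f₀ : ℝ → ℝ) (h₁ : IsFullSupportDensity f₁)
    (h₀ : IsFullSupportDensity f₀) (hm : StrictMLRP f₁ f₀) :
    ∃ δ : ℝ → ℝ, IsClassifier δ ∧ 0 < FPR δ f₀ ∧ FPR δ f₀ < TPR δ f₁ ∧ FPR δ f₀ ≤ 1 ∧ TPR δ f₁ ≤ 1 := by
  set δ : ℝ → ℝ := fun s => f₁ s / (f₁ s + f₀ s) with hδdef
  have hsum : ∀ s, 0 < f₁ s + f₀ s := fun s => add_pos (h₁.2.1 s) (h₀.2.1 s)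
  have hclass : IsClassifier δ := by
    constructor
    · exact h₁.1.div (h₁.1.add h₀.1)
    · intro s
      constructor
      · exact div_nonneg (h₁.2.1 s).le (hsum s).le
      · rw [div_le_one (hsum s)]
        linarith [(h₀.2.1 s).le]
  have hint₁ := classifier_mul_integrable hclass h₁
  have hint₀ := classifier_mul_integrable hclass h₀
  have hF_pos : 0 < FPR δ f₀ := by
    rw [FPR, integral_pos_iff_support_of_nonneg
      (fun s => mul_nonneg (hclass.2 s).1 (h₀.2.1 s).le) hint₀]
    have hsupp : Function.support (fun s => δ s * f₀ s) = Set.univ := by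
      ext s
      have : 0 < δ s * f₀ s :=
        mul_pos (div_pos (h₁.2.1 s) (hsum s)) (h₀.2.1 s)
      simp only [Function.support, Set.mem_setOf_eq, Set.mem_univ, iff_true]
      exact this.ne'
    rw [hsupp]; simp
  have hF_le : FPR δ f₀ ≤ 1 := by
    rw [FPR, ← h₀.2.2]
    refine integral_mono hint₀ (dens_integrable h₀) (fun s => ?_)
    have := (hclass.2 s).2
    nlinarith [(h₀.2.1 s).le]
  have hT_le : TPR δ f₁ ≤ 1 := by
    rw [TPR, ← h₁.2.2]
    refine integral_mono hint₁ (dens_integrable h₁) (fun s => ?_)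
    have := (hclass.2 s).2
    nlinarith [(h₁.2.1 s).le]
  -- the quadratic gain term
  set q : ℝ → ℝ := fun s => (f₁ s - f₀ s)^2 / (f₁ s + f₀ s) with hqdef
  have hq_nonneg : ∀ s, 0 ≤ q s := fun s => div_nonneg (sq_nonneg _) (hsum s).le
  have hq_int : Integrable q := by
    refine ((dens_integrable h₁).add (dens_integrable h₀)).mono'
      (((h₁.1.sub h₀.1).pow_const 2).div (h₁.1.add h₀.1)).aestronglyMeasurable ?_
    filter_upwards with s
    rw [Real.norm_eq_abs, abs_of_nonneg (hq_nonneg s), Pi.add_apply, div_le_iff₀ (hsum s)]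
    nlinarith [h₁.2.1 s, h₀.2.1 s]
  have hq_pos : 0 < ∫ s, q s := by
    rw [integral_pos_iff_support_of_nonneg hq_nonneg hq_int]
    by_contra hle
    push_neg at hle
    have hle0 : volume (Function.support q) = 0 := le_antisymm hle bot_le
    -- the complement of the support is a subsingleton
    have hsub : Set.Subsingleton ((Function.support q)ᶜ) := by
      intro s hs t ht
      simp only [Set.mem_compl_iff, Function.mem_support, not_not, hqdef] at hs ht
      have hs' : f₁ s = f₀ s := by
        have := div_eq_zero_iff.mp hs
        rcases this with h | h
        · have := sq_eq_zero_iff.mp h; linarith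
        · exact absurd h (hsum s).ne'
      have ht' : f₁ t = f₀ t := by
        have := div_eq_zero_iff.mp ht
        rcases this with h | h
        · have := sq_eq_zero_iff.mp h; linarith
        · exact absurd h (hsum t).ne'
      by_contra hne
      rcases lt_or_gt_of_ne hne with hlt | hlt
      · have := hm s t hlt; rw [hs', ht'] at this; nlinarith
      · have := hm t s hlt; rw [hs', ht'] at this; nlinarith
    have hcnull : volume ((Function.support q)ᶜ) = 0 :=
      Set.Subsingleton.measure_zero hsub volume
    have : volume (Set.univ : Set ℝ) ≤
        volume (Function.support q) + volume ((Function.support q)ᶜ) := by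
      rw [← Set.union_compl_self (Function.support q)]
      exact measure_union_le _ _
    rw [hle0, hcnull] at this
    simp at this
  have hdiff : TPR δ f₁ - FPR δ f₀ = (1/2) * ∫ s, q s := by
    have hsub_int : Integrable (fun s => f₁ s - f₀ s) :=
      (dens_integrable h₁).sub (dens_integrable h₀)
    have key : ∀ s, δ s * f₁ s - δ s * f₀ s = (1/2) * (f₁ s - f₀ s) + (1/2) * q s := by
      intro s
      have h := (hsum s).ne'
      have e1 : δ s * (f₁ s + f₀ s) = f₁ s := div_mul_cancel₀ _ h
      have e2 : q s * (f₁ s + f₀ s) = (f₁ s - f₀ s)^2 := div_mul_cancel₀ _ h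
      have e0 : (f₁ s + f₀ s)⁻¹ * (f₁ s + f₀ s) = 1 := inv_mul_cancel₀ h
      apply mul_right_cancel₀ h
      linear_combination (f₁ s - f₀ s) * e1 + (1/2) * e2 - (f₁ s - f₀ s)^2 * e0
    rw [TPR, FPR, ← integral_sub hint₁ hint₀]
    calc (∫ s, δ s * f₁ s - δ s * f₀ s)
        = ∫ s, ((1/2) * (f₁ s - f₀ s) + (1/2) * q s) := by
          exact integral_congr_ae (Filter.Eventually.of_forall key)
      _ = (1/2) * (∫ s, (f₁ s - f₀ s)) + (1/2) * ∫ s, q s := by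
          rw [integral_add (hsub_int.const_mul _) (hq_int.const_mul _),
            integral_const_mul, integral_const_mul]
      _ = (1/2) * ∫ s, q s := by
          rw [integral_sub (dens_integrable h₁) (dens_integrable h₀), h₁.2.2, h₀.2.2]
          ring
  refine ⟨δ, hclass, hF_pos, ?_, hF_le, hT_le⟩
  nlinarith

lemma mix_classifier (f₁ f₀ δ : ℝ → ℝ) (h₁ : IsFullSupportDensity f₁)
    (h₀ : IsFullSupportDensity f₀) (hδ : IsClassifier δ)
    (hF0 : 0 ≤ FPR δ f₀) (hF1 : FPR δ f₀ ≤ 1)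
    (ε : ℝ) (hε : 0 < ε) (hε2 : 2 * ε ≤ TPR δ f₁ - FPR δ f₀) :
    ∃ δ' : ℝ → ℝ, IsClassifier δ' ∧ TPR δ' f₁ = 1/2 + ε ∧ FPR δ' f₀ = 1/2 := by
  set T := TPR δ f₁ with hT
  set F := FPR δ f₀ with hF
  have hD : 0 < T - F := by linarith
  set a : ℝ := ε / (T - F) with ha
  have ha_pos : 0 < a := div_pos hε hD
  have ha_le : a ≤ 1/2 := by
    rw [ha, div_le_iff₀ hD]; linarith
  set b : ℝ := 1/2 - a * F with hb
  have hb_nonneg : 0 ≤ b := by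
    have : a * F ≤ 1/2 * 1 := mul_le_mul ha_le hF1 hF0 (by norm_num)
    rw [hb]; linarith
  have hab : a + b ≤ 1 := by
    have : 0 ≤ a * F := mul_nonneg ha_pos.le hF0
    rw [hb]; linarith
  refine ⟨fun s => a * δ s + b, ⟨(hδ.1.const_mul a).add measurable_const, fun s => ?_⟩, ?_, ?_⟩
  · have h0 := (hδ.2 s).1
    have h1 := (hδ.2 s).2
    constructor
    · have : 0 ≤ a * δ s := mul_nonneg ha_pos.le h0
      simp only []; linarith
    · have : a * δ s ≤ a := by nlinarith
      simp only []; linarith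
  · have hint := classifier_mul_integrable hδ h₁
    have : TPR (fun s => a * δ s + b) f₁ = a * T + b := by
      rw [TPR, hT, TPR]
      calc (∫ s, (a * δ s + b) * f₁ s)
          = ∫ s, (a * (δ s * f₁ s) + b * f₁ s) := by
            congr 1; funext s; ring
        _ = a * (∫ s, δ s * f₁ s) + b * ∫ s, f₁ s := by
            rw [integral_add (hint.const_mul _) ((dens_integrable h₁).const_mul _),
              integral_const_mul, integral_const_mul]
        _ = a * (∫ s, δ s * f₁ s) + b := by rw [h₁.2.2]; ring
    rw [this, hb]
    have : a * (T - F) = ε := by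
      rw [ha]; field_simp
    linarith
  · have hint := classifier_mul_integrable hδ h₀
    have : FPR (fun s => a * δ s + b) f₀ = a * F + b := by
      rw [FPR, hF, FPR]
      calc (∫ s, (a * δ s + b) * f₀ s)
          = ∫ s, (a * (δ s * f₀ s) + b * f₀ s) := by
            congr 1; funext s; ring
        _ = a * (∫ s, δ s * f₀ s) + b * ∫ s, f₀ s := by
            rw [integral_add (hint.const_mul _) ((dens_integrable h₀).const_mul _),
              integral_const_mul, integral_const_mul]
        _ = a * (∫ s, δ s * f₀ s) + b := by rw [h₀.2.2]; ring
    rw [this, hb]; ring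

/-- Error-rate balance together with informativeness can always be attained via
group-specific randomized post-processing: there exist common error rates
`0 < ℱ < 𝒯 < 1` and classifiers `δX`, `δY` realizing them for the respective groups. -/
theorem error_rate_balance_attainable
    (f₁X f₀X f₁Y f₀Y : ℝ → ℝ)
    (h₁X : IsFullSupportDensity f₁X) (h₀X : IsFullSupportDensity f₀X)
    (h₁Y : IsFullSupportDensity f₁Y) (h₀Y : IsFullSupportDensity f₀Y)
    (hmX : StrictMLRP f₁X f₀X) (hmY : StrictMLRP f₁Y f₀Y) :
    ∃ (𝒯 ℱ : ℝ) (δX δY : ℝ → ℝ),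
      0 < ℱ ∧ ℱ < 𝒯 ∧ 𝒯 < 1 ∧
      IsClassifier δX ∧ IsClassifier δY ∧
      TPR δX f₁X = 𝒯 ∧ FPR δX f₀X = ℱ ∧
      TPR δY f₁Y = 𝒯 ∧ FPR δY f₀Y = ℱ := by
  obtain ⟨δX₀, hcX, hFXpos, hFXlt, hFXle, hTXle⟩ := base_classifier f₁X f₀X h₁X h₀X hmX
  obtain ⟨δY₀, hcY, hFYpos, hFYlt, hFYle, hTYle⟩ := base_classifier f₁Y f₀Y h₁Y h₀Y hmY
  set ε : ℝ := (1/2) * min (TPR δX₀ f₁X - FPR δX₀ f₀X) (TPR δY₀ f₁Y - FPR δY₀ f₀Y) with hε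
  have hεpos : 0 < ε := by
    apply mul_pos (by norm_num)
    exact lt_min (by linarith) (by linarith)
  have hεX : 2 * ε ≤ TPR δX₀ f₁X - FPR δX₀ f₀X := by
    have := min_le_left (TPR δX₀ f₁X - FPR δX₀ f₀X) (TPR δY₀ f₁Y - FPR δY₀ f₀Y)
    rw [hε]; linarith
  have hεY : 2 * ε ≤ TPR δY₀ f₁Y - FPR δY₀ f₀Y := by
    have := min_le_right (TPR δX₀ f₁X - FPR δX₀ f₀X) (TPR δY₀ f₁Y - FPR δY₀ f₀Y)
    rw [hε]; linarith
  have hεlt : ε < 1/2 := by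
    have h1 : TPR δX₀ f₁X - FPR δX₀ f₀X < 1 := by linarith
    have := min_le_left (TPR δX₀ f₁X - FPR δX₀ f₀X) (TPR δY₀ f₁Y - FPR δY₀ f₀Y)
    rw [hε]; linarith
  obtain ⟨δX, hδX, hTX, hFX⟩ :=
    mix_classifier f₁X f₀X δX₀ h₁X h₀X hcX hFXpos.le hFXle ε hεpos hεX
  obtain ⟨δY, hδY, hTY, hFY⟩ :=
    mix_classifier f₁Y f₀Y δY₀ h₁Y h₀Y hcY hFYpos.le hFYle ε hεpos hεY
  exact ⟨1/2 + ε, 1/2, δX, δY, by norm_num, by linarith, by linarith,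
    hδX, hδY, hTX, hFX, hTY, hFY⟩
end

section
/- Let 𝒯, ℱ ∈ ℝ with 0 < ℱ < 𝒯, and let π^X, π^Y ∈ [0,1]. Then π^X·𝒯/(π^X·𝒯 + (1−π^X)·ℱ) = π^Y·𝒯/(π^Y·𝒯 + (1−π^Y)·ℱ) if and only if π^X = π^Y: given common error rates from an informative classifier, predictive parity holds if and only if equilibrium prevalences are equal across groups. -/
/-- Given common error rates `0 < ℱ < 𝒯` from an informative classifier, predictive
parity (equal positive predictive values) holds if and only if the equilibrium
prevalences are equal across groups. -/
theorem parity_iff_equal_prevalence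
    (𝒯 ℱ : ℝ) (hℱ : 0 < ℱ) (hTF : ℱ < 𝒯)
    (πX πY : ℝ) (hπX : πX ∈ Set.Icc (0 : ℝ) 1) (hπY : πY ∈ Set.Icc (0 : ℝ) 1) :
    πX * 𝒯 / (πX * 𝒯 + (1 - πX) * ℱ) = πY * 𝒯 / (πY * 𝒯 + (1 - πY) * ℱ) ↔
      πX = πY := by
  have hT : 0 < 𝒯 := hℱ.trans hTF
  have dX : 0 < πX * 𝒯 + (1 - πX) * ℱ := by nlinarith [hπX.1, hπX.2]
  have dY : 0 < πY * 𝒯 + (1 - πY) * ℱ := by nlinarith [hπY.1, hπY.2]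
  constructor
  · intro h
    have h1 := (div_eq_div_iff dX.ne' dY.ne').mp h
    have h2 : πX * (𝒯 * ℱ) = πY * (𝒯 * ℱ) := by linear_combination h1
    exact mul_right_cancel₀ (by positivity) h2
  · intro h; rw [h]
end
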